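/- Let q ∈ (0,1) be fixed and let x ∈ (0,1). Then 1/√(π_q) < Γ_q(x+1) / Γ_q(x + 1/2) < (1 + √q)/√(π_q), where π_q = (Γ_q(1/2))². -/

import Mathlib

/-- The q-deformed Gamma function:
    `Γ_q(x) = (1-q)^(1-x) * ∏_{n=0}^∞ (1-q^(n+1))/(1-q^(n+x))`. -/
noncomputable def qGamma (q x : ℝ) : ℝ :=
  (1 - q) ^ (1 - x) * ∏' n : ℕ, (1 - q ^ ((n : ℝ) + 1)) / (1 - q ^ ((n : ℝ) + x))

/-- The q-bracket: `[x]_q = (1-q^x)/(1-q)`. -/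
noncomputable def qBracket (q x : ℝ) : ℝ := (1 - q ^ x) / (1 - q)


/-!
Taking logarithms, `Γ_q(a) = (1-q)^(1-a) · exp (L 1 - L a)` with `L a = ∑ₙ log (1 - q^(n+a))`, so
`Γ_q(x+b)/Γ_q(x+a) = (1-q)^(a-b) · exp (L (x+a) - L (x+b))`. For `a < b` each summand
`log (1 - q^(n+x+a)) - log (1 - q^(n+x+b))` is strictly increasing in `x`, hence so is the ratio.
With `a = 1/2`, `b = 1` the ratio at `x = 0` is `1/Γ_q(1/2)`, and by `Γ_q(y+1) = [y]_q Γ_q(y)` its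
value at `x = 1` is `([1]_q/[1/2]_q)/Γ_q(1/2) = (1+√q)/Γ_q(1/2)`.
-/

open Real Set

/-- `log (q^a; q)_∞`, the logarithm of the infinite `q`-Pochhammer symbol. -/
noncomputable def logQPochhammer (q a : ℝ) : ℝ := ∑' n : ℕ, log (1 - q ^ ((n : ℝ) + a))

variable {q : ℝ}

lemma one_sub_rpow_pos (hq0 : 0 < q) (hq1 : q < 1) {c : ℝ} (hc : 0 < c) : 0 < 1 - q ^ c :=
  sub_pos.2 (rpow_lt_one hq0.le hq1 hc)

lemma summable_log_one_sub_rpow_natCast_add (hq0 : 0 < q) (hq1 : q < 1) (a : ℝ) :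
    Summable fun n : ℕ => log (1 - q ^ ((n : ℝ) + a)) := by
  have hgeom : Summable fun n : ℕ => -q ^ ((n : ℝ) + a) := by
    simpa only [rpow_add hq0, rpow_natCast, ← mul_neg, mul_comm] using
      ((summable_geometric_of_lt_one hq0.le hq1).mul_left (-q ^ a))
  simpa only [← sub_eq_add_neg] using summable_log_one_add_of_summable hgeom

lemma logQPochhammer_eq_log_add (hq0 : 0 < q) (hq1 : q < 1) (a : ℝ) :
    logQPochhammer q a = log (1 - q ^ a) + logQPochhammer q (a + 1) := by
  rw [logQPochhammer, (summable_log_one_sub_rpow_natCast_add hq0 hq1 a).tsum_eq_zero_add,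
    logQPochhammer]
  push_cast
  simp only [zero_add, add_right_comm _ (1 : ℝ) a, add_assoc]

lemma qGamma_eq_rpow_mul_exp (hq0 : 0 < q) (hq1 : q < 1) {a : ℝ} (ha : 0 < a) :
    qGamma q a = (1 - q) ^ (1 - a) * exp (logQPochhammer q 1 - logQPochhammer q a) := by
  have hpos : ∀ (c : ℝ) (n : ℕ), 0 < c → 0 < 1 - q ^ ((n : ℝ) + c) := fun c n hc =>
    one_sub_rpow_pos hq0 hq1 (by positivity)
  have hlog : HasSum (fun n : ℕ => log ((1 - q ^ ((n : ℝ) + 1)) / (1 - q ^ ((n : ℝ) + a))))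
      (logQPochhammer q 1 - logQPochhammer q a) := by
    simp only [fun n : ℕ => log_div (hpos 1 n one_pos).ne' (hpos a n ha).ne']
    exact (summable_log_one_sub_rpow_natCast_add hq0 hq1 1).hasSum.sub
      (summable_log_one_sub_rpow_natCast_add hq0 hq1 a).hasSum
  rw [qGamma, (hasProd_of_hasSum_log (fun n => div_pos (hpos 1 n one_pos) (hpos a n ha))
    hlog).tprod_eq]

lemma qGamma_pos (hq0 : 0 < q) (hq1 : q < 1) {a : ℝ} (ha : 0 < a) : 0 < qGamma q a := by
  rw [qGamma_eq_rpow_mul_exp hq0 hq1 ha]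
  have := sub_pos.2 hq1
  positivity

lemma qGamma_one (hq0 : 0 < q) (hq1 : q < 1) : qGamma q 1 = 1 := by
  simp [qGamma_eq_rpow_mul_exp hq0 hq1 one_pos]

lemma qGamma_add_one (hq0 : 0 < q) (hq1 : q < 1) {a : ℝ} (ha : 0 < a) :
    qGamma q (a + 1) = qBracket q a * qGamma q a := by
  have h1q : 0 < 1 - q := sub_pos.2 hq1
  have hqa := one_sub_rpow_pos hq0 hq1 ha
  rw [qGamma_eq_rpow_mul_exp hq0 hq1 (by linarith), qGamma_eq_rpow_mul_exp hq0 hq1 ha,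
    logQPochhammer_eq_log_add hq0 hq1 a, qBracket,
    show logQPochhammer q 1 - logQPochhammer q (a + 1) =
      log (1 - q ^ a) + (logQPochhammer q 1 - (log (1 - q ^ a) + logQPochhammer q (a + 1))) by
      ring,
    exp_add, exp_log hqa, show 1 - (a + 1) = (1 - a) - 1 by ring, rpow_sub_one h1q.ne']
  field_simp

lemma qBracket_one_div_qBracket_half (hq0 : 0 ≤ q) (hq1 : q < 1) :
    qBracket q 1 / qBracket q (1 / 2) = 1 + √q := by
  have hsq : √q < 1 := (sqrt_lt' one_pos).2 (by simpa using hq1)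
  have h1q : (1 : ℝ) - q ≠ 0 := (sub_pos.2 hq1).ne'
  rw [qBracket, qBracket, rpow_one, ← sqrt_eq_rpow, div_div_div_cancel_right₀ h1q,
    div_eq_iff (sub_pos.2 hsq).ne']
  nlinarith [sq_sqrt hq0]

-- After cross-multiplying, the difference of the two sides is `(q^x - q^y) (q^b - q^a) < 0`.
lemma log_one_sub_rpow_add_sub_lt (hq0 : 0 < q) (hq1 : q < 1) {a b x y : ℝ}
    (hab : a < b) (hxa : 0 < x + a) (hxy : x < y) :
    log (1 - q ^ (x + a)) - log (1 - q ^ (x + b)) <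
      log (1 - q ^ (y + a)) - log (1 - q ^ (y + b)) := by
  have p1 := one_sub_rpow_pos hq0 hq1 hxa
  have p2 := one_sub_rpow_pos hq0 hq1 (by linarith : 0 < x + b)
  have p3 := one_sub_rpow_pos hq0 hq1 (by linarith : 0 < y + a)
  have p4 := one_sub_rpow_pos hq0 hq1 (by linarith : 0 < y + b)
  have hyx : q ^ y < q ^ x := rpow_lt_rpow_of_exponent_gt hq0 hq1 hxy
  have hba : q ^ b < q ^ a := rpow_lt_rpow_of_exponent_gt hq0 hq1 hab
  have key : (1 - q ^ (x + a)) * (1 - q ^ (y + b)) < (1 - q ^ (y + a)) * (1 - q ^ (x + b)) := by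
    simp only [rpow_add hq0] at *
    nlinarith [mul_pos (sub_pos.2 hyx) (sub_pos.2 hba)]
  have := log_lt_log (by positivity) key
  rw [log_mul p1.ne' p4.ne', log_mul p3.ne' p2.ne'] at this
  linarith

lemma strictMonoOn_logQPochhammer_sub (hq0 : 0 < q) (hq1 : q < 1) {a b : ℝ} (hab : a < b) :
    StrictMonoOn (fun x => logQPochhammer q (x + a) - logQPochhammer q (x + b)) (Ioi (-a)) := by
  intro x hx y _ hxy
  have hsum (c : ℝ) := summable_log_one_sub_rpow_natCast_add hq0 hq1 c
  have hterm (n : ℕ) :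
      log (1 - q ^ ((n : ℝ) + (x + a))) - log (1 - q ^ ((n : ℝ) + (x + b))) <
        log (1 - q ^ ((n : ℝ) + (y + a))) - log (1 - q ^ ((n : ℝ) + (y + b))) := by
    simpa only [add_assoc] using log_one_sub_rpow_add_sub_lt hq0 hq1 hab
      (by linarith [mem_Ioi.1 hx, n.cast_nonneg (α := ℝ)] : 0 < ((n : ℝ) + x) + a)
      (by linarith : (n : ℝ) + x < n + y)
  simp only [logQPochhammer]
  rw [← (hsum _).tsum_sub (hsum _), ← (hsum _).tsum_sub (hsum _)]
  exact ((hsum _).sub (hsum _)).tsum_lt_tsum (fun n => (hterm n).le) (hterm 0)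
    ((hsum _).sub (hsum _))

lemma qGamma_add_div_qGamma_add (hq0 : 0 < q) (hq1 : q < 1) {a b x : ℝ} (hab : a < b)
    (hx : -a < x) :
    qGamma q (x + b) / qGamma q (x + a) =
      (1 - q) ^ (a - b) * exp (logQPochhammer q (x + a) - logQPochhammer q (x + b)) := by
  rw [qGamma_eq_rpow_mul_exp hq0 hq1 (by linarith), qGamma_eq_rpow_mul_exp hq0 hq1 (by linarith),
    mul_div_mul_comm, ← rpow_sub (sub_pos.2 hq1), ← exp_sub]
  ring_nf

theorem strictMonoOn_qGamma_add_div_qGamma_add (hq0 : 0 < q) (hq1 : q < 1) {a b : ℝ}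
    (hab : a < b) :
    StrictMonoOn (fun x => qGamma q (x + b) / qGamma q (x + a)) (Ioi (-a)) := by
  intro x hx y hy hxy
  simp only [qGamma_add_div_qGamma_add hq0 hq1 hab hx, qGamma_add_div_qGamma_add hq0 hq1 hab hy]
  exact mul_lt_mul_of_pos_left
    (exp_lt_exp.2 (strictMonoOn_logQPochhammer_sub hq0 hq1 hab hx hy hxy))
    (rpow_pos_of_pos (sub_pos.2 hq1) _)

theorem qSandor_inequality_v2 (q x : ℝ) (hq : q ∈ Set.Ioo (0 : ℝ) 1)
    (hx : x ∈ Set.Ioo (0 : ℝ) 1) :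
    1 / Real.sqrt ((qGamma q (1 / 2)) ^ 2) < qGamma q (x + 1) / qGamma q (x + 1 / 2) ∧
    qGamma q (x + 1) / qGamma q (x + 1 / 2) <
      (1 + Real.sqrt q) * (1 / Real.sqrt ((qGamma q (1 / 2)) ^ 2)) := by
  obtain ⟨hq0, hq1⟩ := hq
  have hmono := strictMonoOn_qGamma_add_div_qGamma_add hq0 hq1 (by norm_num : (1 / 2 : ℝ) < 1)
  have hmem {y : ℝ} (hy : 0 ≤ y) : y ∈ Ioi (-(1 / 2)) := by rw [mem_Ioi]; linarith
  rw [sqrt_sq (qGamma_pos hq0 hq1 (by norm_num)).le]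
  have hzero : qGamma q (0 + 1) / qGamma q (0 + 1 / 2) = 1 / qGamma q (1 / 2) := by
    rw [zero_add, zero_add, qGamma_one hq0 hq1]
  have hone : qGamma q (1 + 1) / qGamma q (1 + 1 / 2) = (1 + √q) * (1 / qGamma q (1 / 2)) := by
    rw [qGamma_add_one hq0 hq1 one_pos, add_comm 1 (1 / 2 : ℝ),
      qGamma_add_one hq0 hq1 (by norm_num), qGamma_one hq0 hq1,
      ← qBracket_one_div_qBracket_half hq0.le hq1, mul_div_mul_comm, mul_one_div]
  exact ⟨hzero ▸ hmono (hmem le_rfl) (hmem hx.1.le) hx.1,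
    hone ▸ hmono (hmem hx.1.le) (hmem zero_le_one) hx.2⟩
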